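/- Under Assumption 2.1, for every x ∈ (x_border, x_ref) the derivative of f satisfies |f′(x)| = α_off·f(x)/(β − α_on·x) ≤ α_off·x_ref/(β − α_on·x_ref) < 1; in particular, the fixed point x* ∈ (x_border, x_ref) of f is a stable fixed point of the discrete dynamical system xₙ₊₁ = f(xₙ). -/

import Mathlib

/-- The border point `x_border`. -/
noncomputable def xBorder (α_on β x_ref : ℝ) : ℝ :=
  β / α_on + (x_ref - β / α_on) * Real.exp α_on

/-- The stroboscopic (period-1) map of the deterministic switching buck converter. -/
noncomputable def strobo (α_on α_off β x_ref : ℝ) (x : ℝ) : ℝ :=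
  if x ≤ xBorder α_on β x_ref then
    β / α_on + (x - β / α_on) * Real.exp (-α_on)
  else
    x_ref * Real.exp (-α_off) *
      ((β / α_on - x) / (β / α_on - x_ref)) ^ (α_off / α_on)

/-!
Write `c = β / α_on`, `p = α_off / α_on` and `g x = (c - x) / (c - x_ref)`. Beyond `x_border` the
map is `x_ref * exp (-α_off) * g x ^ p`, whose logarithmic derivative is `-p / (c - x)`; this is
the formula for `|f'|`. Moreover `x > x_border` means exactly `g x < exp α_on`, so for `p ≥ 1`
we get `g x ^ p ≤ exp (α_off - α_on) * g x` and hence `f x ≤ x_ref * g x`: the graph lies below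
the line through `(c, 0)` and `(x_ref, x_ref)`, which is the bound on `|f'|`. That bound is
below `1` by the assumption `α_off * x_ref < β - α_on * x_ref`.
-/

open Real

theorem hasDerivAt_mul_sub_div_rpow (K p : ℝ) {c r x : ℝ} (hx : x < c) (hr : r < c) :
    HasDerivAt (fun y => K * ((c - y) / (c - r)) ^ p)
      (-(p * (K * ((c - x) / (c - r)) ^ p) / (c - x))) x := by
  have hg : 0 < (c - x) / (c - r) := div_pos (sub_pos.2 hx) (sub_pos.2 hr)
  have hinner : HasDerivAt (fun y => (c - y) / (c - r)) (-1 / (c - r)) x := by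
    simpa using ((hasDerivAt_id x).const_sub c).div_const (c - r)
  refine ((hinner.rpow_const (p := p) (Or.inl hg.ne')).const_mul K).congr_deriv ?_
  rw [rpow_sub hg, rpow_one]
  field_simp [(sub_pos.2 hx).ne', (sub_pos.2 hr).ne']

theorem rpow_le_exp_mul_sub_one_mul_self {g a p : ℝ} (hg : 0 < g) (hga : g ≤ exp a)
    (hp : 1 ≤ p) : g ^ p ≤ exp (a * (p - 1)) * g := by
  calc g ^ p = g ^ (p - 1) * g := by rw [rpow_sub hg, rpow_one, div_mul_cancel₀ _ hg.ne']
    _ ≤ exp a ^ (p - 1) * g := by gcongr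
    _ = exp (a * (p - 1)) * g := by rw [← exp_mul]

section Strobo

variable {α_on α_off β x_ref x : ℝ}

theorem strobo_of_xBorder_lt (h : xBorder α_on β x_ref < x) :
    strobo α_on α_off β x_ref x =
      x_ref * exp (-α_off) * ((β / α_on - x) / (β / α_on - x_ref)) ^ (α_off / α_on) :=
  if_neg (not_le.2 h)

theorem sub_div_sub_lt_exp_of_xBorder_lt (hr : x_ref < β / α_on)
    (h : xBorder α_on β x_ref < x) :
    (β / α_on - x) / (β / α_on - x_ref) < exp α_on := by
  rw [div_lt_iff₀ (sub_pos.2 hr)]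
  unfold xBorder at h
  linarith

theorem hasDerivAt_strobo (hα : α_on ≠ 0) (h : xBorder α_on β x_ref < x) (hx : x < β / α_on)
    (hr : x_ref < β / α_on) :
    HasDerivAt (strobo α_on α_off β x_ref)
      (-(α_off * strobo α_on α_off β x_ref x / (β - α_on * x))) x := by
  have hev : (fun y => x_ref * exp (-α_off) *
      ((β / α_on - y) / (β / α_on - x_ref)) ^ (α_off / α_on)) =ᶠ[nhds x]
      strobo α_on α_off β x_ref :=
    (eventually_gt_nhds h).mono fun y hy => (strobo_of_xBorder_lt hy).symm
  refine ((hasDerivAt_mul_sub_div_rpow _ _ hx hr).congr_of_eventuallyEq hev.symm).congr_deriv ?_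
  rw [strobo_of_xBorder_lt h]
  field_simp [(sub_pos.2 hx).ne']

theorem strobo_nonneg_of_xBorder_lt (hx_ref : 0 < x_ref) (h : xBorder α_on β x_ref < x)
    (hx : x < β / α_on) (hr : x_ref < β / α_on) : 0 ≤ strobo α_on α_off β x_ref x := by
  have hg : 0 < (β / α_on - x) / (β / α_on - x_ref) := div_pos (sub_pos.2 hx) (sub_pos.2 hr)
  rw [strobo_of_xBorder_lt h]
  positivity

theorem strobo_le_of_xBorder_lt (hx_ref : 0 < x_ref) (hα : 0 < α_on) (hoff : α_on ≤ α_off)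
    (h : xBorder α_on β x_ref < x) (hx : x < β / α_on) (hr : x_ref < β / α_on) :
    strobo α_on α_off β x_ref x ≤ x_ref * ((β - α_on * x) / (β - α_on * x_ref)) := by
  set g := (β / α_on - x) / (β / α_on - x_ref)
  have hg : 0 < g := div_pos (sub_pos.2 hx) (sub_pos.2 hr)
  have hgp : g ^ (α_off / α_on) ≤ exp (α_off - α_on) * g := by
    have := rpow_le_exp_mul_sub_one_mul_self hg (sub_div_sub_lt_exp_of_xBorder_lt hr h).le
      ((one_le_div hα).2 hoff)
    rwa [mul_sub_one, mul_div_cancel₀ _ hα.ne'] at this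
  have hg_eq : g = (β - α_on * x) / (β - α_on * x_ref) := by
    simp only [g]
    rw [← mul_div_mul_left _ _ hα.ne', mul_sub, mul_sub, mul_div_cancel₀ _ hα.ne']
  calc strobo α_on α_off β x_ref x = x_ref * exp (-α_off) * g ^ (α_off / α_on) :=
        strobo_of_xBorder_lt h
    _ ≤ x_ref * exp (-α_off) * (exp (α_off - α_on) * g) := by gcongr
    _ = x_ref * (exp (-α_on) * g) := by rw [← mul_assoc, mul_assoc x_ref, ← exp_add]; ring_nf
    _ ≤ x_ref * g := by gcongr; exact mul_le_of_le_one_left hg.le (exp_le_one_iff.2 (by linarith))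
    _ = x_ref * ((β - α_on * x) / (β - α_on * x_ref)) := by rw [hg_eq]

end Strobo

theorem strobo_deriv_bound_general (x_ref α_on α_off β : ℝ)
    (hx : 0 < x_ref) (hα : 0 < α_on)
    (hoff1 : α_on < α_off)
    (hoff2 : α_off < ((β / α_on - x_ref) / x_ref) * α_on) :
    (∀ x ∈ Set.Ioo (xBorder α_on β x_ref) x_ref, ∃ d : ℝ,
      HasDerivAt (strobo α_on α_off β x_ref) d x ∧
      |d| = α_off * strobo α_on α_off β x_ref x / (β - α_on * x) ∧
      |d| ≤ α_off * x_ref / (β - α_on * x_ref)) ∧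
    α_off * x_ref / (β - α_on * x_ref) < 1 := by
  have hoff : 0 < α_off := hα.trans hoff1
  have hgap : α_off * x_ref < β - α_on * x_ref := by
    rwa [show (β / α_on - x_ref) / x_ref * α_on = (β - α_on * x_ref) / x_ref by field_simp,
      lt_div_iff₀ hx] at hoff2
  have hβr : 0 < β - α_on * x_ref := lt_trans (by positivity) hgap
  have hr : x_ref < β / α_on := by rw [lt_div_iff₀ hα]; linarith
  refine ⟨fun x ⟨hxb, hxr⟩ => ?_, (div_lt_one hβr).2 hgap⟩
  have hxc : x < β / α_on := hxr.trans hr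
  have hβx : 0 < β - α_on * x := by nlinarith
  have hs := strobo_nonneg_of_xBorder_lt (α_off := α_off) hx hxb hxc hr
  have habs : |-(α_off * strobo α_on α_off β x_ref x / (β - α_on * x))|
      = α_off * strobo α_on α_off β x_ref x / (β - α_on * x) := by
    rw [abs_neg, abs_of_nonneg (by positivity)]
  refine ⟨_, hasDerivAt_strobo hα.ne' hxb hxc hr, habs, ?_⟩
  rw [habs]
  calc α_off * strobo α_on α_off β x_ref x / (β - α_on * x)
      ≤ α_off * (x_ref * ((β - α_on * x) / (β - α_on * x_ref))) / (β - α_on * x) := by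
        gcongr; exact strobo_le_of_xBorder_lt hx hα hoff1.le hxb hxc hr
    _ = α_off * x_ref / (β - α_on * x_ref) := by field_simp

theorem strobo_deriv_bound (x_ref α_on α_off β : ℝ)
    (hx : 0 < x_ref) (hα : 0 < α_on) (hα2 : α_on < Real.log 2)
    (hβ1 : 2 * x_ref * α_on < β)
    (hβ2 : β < (Real.exp α_on / (Real.exp α_on - 1)) * x_ref * α_on)
    (hoff1 : α_on < α_off)
    (hoff2 : α_off < ((β / α_on - x_ref) / x_ref) * α_on) :
    (∀ x ∈ Set.Ioo (xBorder α_on β x_ref) x_ref, ∃ d : ℝ,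
      HasDerivAt (strobo α_on α_off β x_ref) d x ∧
      |d| = α_off * strobo α_on α_off β x_ref x / (β - α_on * x) ∧
      |d| ≤ α_off * x_ref / (β - α_on * x_ref)) ∧
    α_off * x_ref / (β - α_on * x_ref) < 1 :=
  strobo_deriv_bound_general x_ref α_on α_off β hx hα hoff1 hoff2
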